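/- Let k ≥ 1, n ≥ 0, and for each j = 1,…,k let T_j = (t_{j,i})_{i≥0} be a sequence of nonnegative integers with ∑_i t_{j,i} = n+j−1. There exists a chain of ideals I₁ ⊇ I₂ ⊇ ⋯ ⊇ I_k of R̂ = ℂ[[x,y]] with dim_ℂ(R̂/I_j) = n+j−1 and t_i(I_j) = t_{j,i} for all i and j if and only if: (1) each T_j is admissible, and (2) for each j = 2,…,k there exists an index m_j such that t_{j,m_j} = t_{j−1,m_j} + 1 and t_{j,i} = t_{j−1,i} for all i ≠ m_j. -/

import Mathlib

/-!
Dehomogenizing at `y = 1` turns the degree-`i` leading forms of the elements of `I` of order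
`≥ i` into a space `W i` of polynomials of degree `≤ i` in one variable `T`, and
`t_i(I) = i + 1 - dim W i`. Multiplication by `y` and by `x` gives `W i ≤ W (i + 1)` and
`T • W i ≤ W (i + 1)`; as no nonzero space of polynomials of bounded degree is stable under
multiplication by `T`, the inclusion is strict once `W i ≠ 0`, which is admissibility.
Along `I ⊇ I'` the types grow pointwise, so types whose sums differ by one differ by one at a
single index. Conversely an admissible `t` is the type of the monomial
ideal of the `x ^ a * y ^ b` with `b ≥ t (a + b)`: there `W i` is the space of polynomials of
degree `< i + 1 - t i`, the colength is `∑ t i`, and pointwise larger types give smaller ideals.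
-/

set_option synthInstance.maxHeartbeats 1000000
set_option maxHeartbeats 1000000

noncomputable section

/-- `R̂ = ℂ[[x,y]]`. -/
abbrev Rhat : Type := MvPowerSeries (Fin 2) ℂ

/-- The maximal ideal `m = (x,y)` of `ℂ[[x,y]]`. -/
def mxy : Ideal Rhat := Ideal.span {MvPowerSeries.X 0, MvPowerSeries.X 1}

/-- The `i`-th entry `t_i(I) = dim_ℂ (m^i / (I ∩ m^i + m^{i+1}))` of the Hilbert–Samuel
type of an ideal `I`. -/
def hsType (I : Ideal Rhat) (i : ℕ) : ℕ :=
  Module.finrank ℂ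
    (↥(mxy ^ i) ⧸ Submodule.comap (mxy ^ i).subtype ((I ⊓ mxy ^ i) ⊔ mxy ^ (i + 1)))

/-- A sequence `(t_i)` is admissible if there is `d` with `t_i = i+1` for `i < d`,
`t_d ≤ d`, and `t` weakly decreasing from `d` on. -/
def Admissible (t : ℕ → ℕ) : Prop :=
  ∃ d : ℕ, (∀ i, i < d → t i = i + 1) ∧ t d ≤ d ∧ ∀ i, d ≤ i → t (i + 1) ≤ t i

namespace Polynomial

lemma mem_degreeLT_iff_coeff {R : Type*} [Semiring R] {n : ℕ} {p : R[X]} :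
    p ∈ degreeLT R n ↔ ∀ k, n ≤ k → p.coeff k = 0 := by
  simp [degreeLT, Submodule.mem_iInf]

instance finiteDimensional_degreeLT (K : Type*) [Field K] (n : ℕ) :
    FiniteDimensional K (degreeLT K n) :=
  (degreeLTEquiv K n).symm.finiteDimensional

lemma finrank_degreeLT (K : Type*) [Field K] (n : ℕ) : Module.finrank K (degreeLT K n) = n := by
  rw [(degreeLTEquiv K n).finrank_eq, Module.finrank_fin_fun]

lemma eq_bot_of_X_mul_mem {R : Type*} [Semiring R] {n : ℕ} {W : Submodule R R[X]}
    (hW : W ≤ degreeLT R n) (hX : ∀ p ∈ W, X * p ∈ W) : W = ⊥ := by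
  refine (Submodule.eq_bot_iff W).2 fun p hp => ext fun k => ?_
  have hpow (m : ℕ) : X ^ m * p ∈ W := by
    induction m with
    | zero => simpa using hp
    | succ m ih => simpa [pow_succ', mul_assoc] using hX _ ih
  rw [← coeff_X_pow_mul p n k, coeff_zero]
  exact mem_degreeLT_iff_coeff.1 (hW (hpow n)) _ (by omega)

end Polynomial

lemma Submodule.finrank_quotient_comap_add_finrank {K M N : Type*} [DivisionRing K]
    [AddCommGroup M] [Module K M] [AddCommGroup N] [Module K N] [FiniteDimensional K N]
    {φ : M →ₗ[K] N} (hφ : Function.Surjective φ) (p : Submodule K N) :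
    Module.finrank K (M ⧸ p.comap φ) + Module.finrank K p = Module.finrank K N := by
  have e : (M ⧸ p.comap φ) ≃ₗ[K] N ⧸ p :=
    (Submodule.quotEquivOfEq _ _ (by rw [LinearMap.ker_comp, Submodule.ker_mkQ])).trans
      ((p.mkQ ∘ₗ φ).quotKerEquivOfSurjective (p.mkQ_surjective.comp hφ))
  rw [e.finrank_eq, p.finrank_quotient_add_finrank]

lemma exists_eq_add_one_of_finsum_eq_add_one {α : Type*} {f g : α → ℕ}
    (hg : (Function.support g).Finite) (hle : f ≤ g) (hsum : ∑ᶠ a, g a = ∑ᶠ a, f a + 1) :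
    ∃ m, g m = f m + 1 ∧ ∀ a, a ≠ m → g a = f a := by
  have hf : (Function.support f).Finite := hg.subset fun a ha => by
    simp only [Function.mem_support] at ha ⊢; have : f a ≤ g a := hle a; omega
  have hd : (Function.support (g - f)).Finite := hg.subset fun a ha => by
    simp only [Function.mem_support, Pi.sub_apply] at ha ⊢; omega
  have hd1 : ∑ᶠ a, (g - f) a = 1 := by
    rw [← add_tsub_cancel_of_le hle, Pi.add_def, finsum_add_distrib hf hd] at hsum
    simpa using hsum
  obtain ⟨m, hm⟩ := (Finsupp.sum_eq_one_iff (Finsupp.ofSupportFinite _ hd)).1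
    (by rwa [finsum_eq_sum _ hd] at hd1)
  have hdiff (a : α) : g a = f a + Finsupp.single m 1 a := by
    have := congr($hm a)
    simp only [Finsupp.ofSupportFinite_coe, Pi.sub_apply] at this
    have : f a ≤ g a := hle a
    omega
  exact ⟨m, by simpa using hdiff m, fun a ha => by simpa [Ne.symm ha] using hdiff a⟩

open MvPowerSeries
open scoped Polynomial

section CoeffVanishingIdeal

variable {σ R : Type*} [CommRing R]

def coeffVanishingIdeal (S : Set (σ →₀ ℕ)) (hS : ∀ e ∈ S, ∀ e' ≤ e, e' ∈ S) :
    Ideal (MvPowerSeries σ R) where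
  carrier := {f | ∀ e ∈ S, coeff e f = 0}
  add_mem' hf hg e he := by simp [hf e he, hg e he]
  zero_mem' := by simp
  smul_mem' r f hf e he := by
    classical
    rw [smul_eq_mul, coeff_mul]
    refine Finset.sum_eq_zero fun p hp => ?_
    rw [hf p.2 (hS e he p.2 (Finset.HasAntidiagonal.mem_antidiagonal.1 hp ▸ le_add_self)), mul_zero]

lemma mem_coeffVanishingIdeal {S : Set (σ →₀ ℕ)} {hS : ∀ e ∈ S, ∀ e' ≤ e, e' ∈ S}
    {f : MvPowerSeries σ R} : f ∈ coeffVanishingIdeal S hS ↔ ∀ e ∈ S, coeff e f = 0 :=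
  Iff.rfl

def quotientCoeffVanishingIdealEquiv (S : Set (σ →₀ ℕ)) (hS : ∀ e ∈ S, ∀ e' ≤ e, e' ∈ S) :
    (MvPowerSeries σ R ⧸ coeffVanishingIdeal (R := R) S hS) ≃ₗ[R] (S → R) := by
  classical
  let π : MvPowerSeries σ R →ₗ[R] (S → R) := LinearMap.pi fun e => coeff e.1
  have hπ : Function.Surjective π := fun v =>
    ⟨fun e => if h : e ∈ S then v ⟨e, h⟩ else 0, funext fun e => dif_pos e.2⟩
  have hker : LinearMap.ker π = (coeffVanishingIdeal S hS).restrictScalars R := by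
    ext f
    simp [π, funext_iff, mem_coeffVanishingIdeal]
  exact (Submodule.Quotient.restrictScalarsEquiv R _).symm ≪≫ₗ
    Submodule.quotEquivOfEq _ _ hker.symm ≪≫ₗ π.quotKerEquivOfSurjective hπ

end CoeffVanishingIdeal

def expXY (a b : ℕ) : Fin 2 →₀ ℕ := Finsupp.single 0 a + Finsupp.single 1 b

@[simp] lemma expXY_apply_zero (a b : ℕ) : expXY a b 0 = a := by simp [expXY]

@[simp] lemma expXY_apply_one (a b : ℕ) : expXY a b 1 = b := by simp [expXY]

@[simp] lemma degree_expXY (a b : ℕ) : (expXY a b).degree = a + b := by simp [expXY]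

lemma expXY_apply_self (e : Fin 2 →₀ ℕ) : expXY (e 0) (e 1) = e := by
  ext s; fin_cases s <;> simp

lemma degree_eq_add (e : Fin 2 →₀ ℕ) : e.degree = e 0 + e 1 := by
  rw [← expXY_apply_self e, degree_expXY, expXY_apply_zero, expXY_apply_one]

lemma expXY_inj {a b a' b' : ℕ} : expXY a b = expXY a' b' ↔ a = a' ∧ b = b' := by
  constructor
  · intro h; exact ⟨by simpa using congr($h 0), by simpa using congr($h 1)⟩
  · rintro ⟨rfl, rfl⟩; rfl

lemma X_mul_mem_mxy_pow_succ (s : Fin 2) {i : ℕ} {f : Rhat} (hf : f ∈ mxy ^ i) :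
    X s * f ∈ mxy ^ (i + 1) := by
  rw [pow_succ']
  exact Ideal.mul_mem_mul (Ideal.subset_span (by fin_cases s <;> simp)) hf

lemma le_order_of_mem_mxy_pow {i : ℕ} {f : Rhat} (hf : f ∈ mxy ^ i) : (i : ℕ∞) ≤ f.order := by
  induction i generalizing f with
  | zero => simp
  | succ i ih =>
    have one_le : ∀ g ∈ mxy, 1 ≤ g.order := by
      intro g hg
      refine one_le_order_iff_constCoeff_eq_zero.2 (?_ : g ∈ RingHom.ker constantCoeff)
      refine Ideal.span_le.2 ?_ hg
      rintro _ (rfl | rfl) <;> simp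
    rw [pow_succ] at hf
    refine Submodule.mul_induction_on hf (fun g hg h hh => ?_) (fun g h hg hh => ?_)
    · calc ((i + 1 : ℕ) : ℕ∞) = i + 1 := by push_cast; rfl
        _ ≤ g.order + h.order := add_le_add (ih hg) (one_le h hh)
        _ ≤ (g * h).order := le_order_mul
    · exact (le_min hg hh).trans min_order_le_add

lemma coeff_expXY_X_zero_mul (a b : ℕ) (f : Rhat) :
    coeff (expXY a b) (X 0 * f) = if a = 0 then 0 else coeff (expXY (a - 1) b) f := by
  rcases a with _ | a
  · rw [X_def, coeff_monomial_mul, if_neg (by simp [expXY, Finsupp.le_def, Fin.forall_fin_two]),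
      if_pos rfl]
  · rw [show expXY (a + 1) b = Finsupp.single 0 1 + expXY a b by ext s; fin_cases s <;> simp [expXY, add_comm],
      X_def, coeff_add_monomial_mul, one_mul, if_neg a.succ_ne_zero, Nat.add_sub_cancel]

lemma coeff_expXY_X_one_mul (a b : ℕ) (f : Rhat) :
    coeff (expXY a b) (X 1 * f) = if b = 0 then 0 else coeff (expXY a (b - 1)) f := by
  rcases b with _ | b
  · rw [X_def, coeff_monomial_mul, if_neg (by simp [expXY, Finsupp.le_def, Fin.forall_fin_two]),
      if_pos rfl]
  · rw [show expXY a (b + 1) = Finsupp.single 1 1 + expXY a b by ext s; fin_cases s <;> simp [expXY, add_comm],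
      X_def, coeff_add_monomial_mul, one_mul, if_neg b.succ_ne_zero, Nat.add_sub_cancel]

lemma exists_eq_X_zero_mul_add_X_one_mul {i : ℕ} {f : Rhat} (hf : ((i + 1 : ℕ) : ℕ∞) ≤ f.order) :
    ∃ g h : Rhat, (i : ℕ∞) ≤ g.order ∧ (i : ℕ∞) ≤ h.order ∧ f = X 0 * g + X 1 * h := by
  have hf' (a b : ℕ) (hab : a + b ≤ i) : coeff (expXY a b) f = 0 :=
    coeff_of_lt_order (lt_of_lt_of_le (by rw [degree_expXY]; exact_mod_cast Nat.lt_succ_of_le hab) hf)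
  -- `X 0 * g` is the part of `f` divisible by `x`, and `X 1 * h` the rest
  let g : Rhat := fun e => coeff (expXY (e 0 + 1) (e 1)) f
  let h : Rhat := fun e => if e 0 = 0 then coeff (expXY 0 (e 1 + 1)) f else 0
  have hg (a b : ℕ) : coeff (expXY a b) g = coeff (expXY (a + 1) b) f := by
    change coeff (expXY (expXY a b 0 + 1) (expXY a b 1)) f = _
    simp
  have hh (a b : ℕ) : coeff (expXY a b) h = if a = 0 then coeff (expXY 0 (b + 1)) f else 0 := by
    change ite (expXY a b 0 = 0) _ _ = _
    simp
  refine ⟨g, h, le_order fun d hd => ?_, le_order fun d hd => ?_, ?_⟩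
  · rw [← expXY_apply_self d, hg]
    exact hf' _ _ (by rw [degree_eq_add] at hd; norm_cast at hd; omega)
  · rw [← expXY_apply_self d, hh]
    split_ifs
    exacts [hf' _ _ (by rw [degree_eq_add] at hd; norm_cast at hd; omega), rfl]
  ext e
  obtain ⟨a, b, rfl⟩ : ∃ a b, e = expXY a b := ⟨e 0, e 1, (expXY_apply_self e).symm⟩
  rw [map_add, coeff_expXY_X_zero_mul, coeff_expXY_X_one_mul]
  rcases a with _ | a <;> rcases b with _ | b
  · simp [hf' 0 0 (Nat.zero_le i)]
  · simp [hh]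
  · simp [hg]
  · simp [hg, hh]

lemma mem_mxy_pow_of_le_order {i : ℕ} {f : Rhat} (hf : (i : ℕ∞) ≤ f.order) : f ∈ mxy ^ i := by
  induction i generalizing f with
  | zero => simp
  | succ i ih =>
    obtain ⟨g, h, hg, hh, rfl⟩ := exists_eq_X_zero_mul_add_X_one_mul hf
    exact add_mem (X_mul_mem_mxy_pow_succ 0 (ih hg)) (X_mul_mem_mxy_pow_succ 1 (ih hh))

theorem mem_mxy_pow_iff {i : ℕ} {f : Rhat} : f ∈ mxy ^ i ↔ (i : ℕ∞) ≤ f.order :=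
  ⟨le_order_of_mem_mxy_pow, mem_mxy_pow_of_le_order⟩

lemma coeff_eq_zero_of_mem_mxy_pow {i : ℕ} {f : Rhat} (hf : f ∈ mxy ^ i) {e : Fin 2 →₀ ℕ}
    (he : e.degree < i) : coeff e f = 0 :=
  coeff_of_lt_order (lt_of_lt_of_le (by exact_mod_cast he) (mem_mxy_pow_iff.1 hf))

/-- The degree-`i` homogeneous component of `f`, dehomogenized by `y = 1`: the coefficient of
`x ^ a * y ^ (i - a)` becomes the coefficient of `T ^ a`. -/
def dehomogenize (i : ℕ) : Rhat →ₗ[ℂ] ℂ[X] :=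
  ∑ a ∈ Finset.range (i + 1), (Polynomial.monomial a).comp (coeff (expXY a (i - a)))

lemma coeff_dehomogenize (i : ℕ) (f : Rhat) (a : ℕ) :
    (dehomogenize i f).coeff a = if a ≤ i then coeff (expXY a (i - a)) f else 0 := by
  simp [dehomogenize, Polynomial.coeff_monomial]

lemma dehomogenize_mem_degreeLT (i : ℕ) (f : Rhat) :
    dehomogenize i f ∈ Polynomial.degreeLT ℂ (i + 1) :=
  Polynomial.mem_degreeLT_iff_coeff.2 fun k hk => by
    rw [coeff_dehomogenize, if_neg (by omega)]

lemma dehomogenize_X_one_mul (i : ℕ) (f : Rhat) :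
    dehomogenize (i + 1) (X 1 * f) = dehomogenize i f := by
  ext a
  rw [coeff_dehomogenize, coeff_dehomogenize, coeff_expXY_X_one_mul]
  by_cases h : a ≤ i
  · rw [if_pos (by omega), if_neg (by omega), if_pos h, show i + 1 - a - 1 = i - a by omega]
  · rw [if_neg h]
    split_ifs <;> first | rfl | omega

lemma dehomogenize_X_zero_mul (i : ℕ) (f : Rhat) :
    dehomogenize (i + 1) (X 0 * f) = Polynomial.X * dehomogenize i f := by
  ext (_ | a)
  · simp [coeff_dehomogenize, coeff_expXY_X_zero_mul]
  · rw [Polynomial.coeff_X_mul, coeff_dehomogenize, coeff_dehomogenize, coeff_expXY_X_zero_mul]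
    by_cases h : a ≤ i
    · rw [if_pos (by omega), if_neg (by omega), if_pos h, show i + 1 - (a + 1) = i - a by omega,
        Nat.add_sub_cancel]
    · rw [if_neg (by omega), if_neg h]

lemma dehomogenize_eq_zero_iff {i : ℕ} {f : Rhat} (hf : f ∈ mxy ^ i) :
    dehomogenize i f = 0 ↔ f ∈ mxy ^ (i + 1) := by
  constructor
  · intro h0
    refine mem_mxy_pow_iff.2 (le_order fun d hd => ?_)
    norm_cast at hd
    rcases Nat.lt_succ_iff_lt_or_eq.1 hd with hd | hd
    · exact coeff_eq_zero_of_mem_mxy_pow hf hd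
    · have := congr(Polynomial.coeff $h0 (d 0))
      rw [degree_eq_add] at hd
      rwa [coeff_dehomogenize, if_pos (by omega), show i - d 0 = d 1 by omega, expXY_apply_self,
        Polynomial.coeff_zero] at this
  · intro hf1
    ext a
    rw [coeff_dehomogenize, Polynomial.coeff_zero]
    split_ifs
    · exact coeff_eq_zero_of_mem_mxy_pow hf1 (by simp; omega)
    · rfl

def homogenize (i : ℕ) (p : ℂ[X]) : Rhat := fun e => if e.degree = i then p.coeff (e 0) else 0

lemma coeff_homogenize (i : ℕ) (p : ℂ[X]) (e : Fin 2 →₀ ℕ) :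
    coeff e (homogenize i p) = if e.degree = i then p.coeff (e 0) else 0 := rfl

lemma homogenize_mem_mxy_pow (i : ℕ) (p : ℂ[X]) : homogenize i p ∈ mxy ^ i :=
  mem_mxy_pow_iff.2 <| le_order fun d hd => by
    rw [coeff_homogenize, if_neg (by norm_cast at hd; omega)]

lemma dehomogenize_homogenize {i : ℕ} {p : ℂ[X]} (hp : p ∈ Polynomial.degreeLT ℂ (i + 1)) :
    dehomogenize i (homogenize i p) = p := by
  ext a
  rw [coeff_dehomogenize, coeff_homogenize]
  by_cases ha : a ≤ i
  · rw [if_pos ha, if_pos (by simp; omega), expXY_apply_zero]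
  · rw [if_neg ha]
    exact (Polynomial.mem_degreeLT_iff_coeff.1 hp a (by omega)).symm

def leadingForms (I : Ideal Rhat) (i : ℕ) : Submodule ℂ ℂ[X] :=
  ((I ⊓ mxy ^ i).restrictScalars ℂ).map (dehomogenize i)

lemma mem_leadingForms {I : Ideal Rhat} {i : ℕ} {p : ℂ[X]} :
    p ∈ leadingForms I i ↔ ∃ f ∈ I, f ∈ mxy ^ i ∧ dehomogenize i f = p := by
  simp [leadingForms, and_assoc]

lemma leadingForms_le_degreeLT (I : Ideal Rhat) (i : ℕ) :
    leadingForms I i ≤ Polynomial.degreeLT ℂ (i + 1) := by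
  rintro _ ⟨f, -, rfl⟩
  exact dehomogenize_mem_degreeLT i f

instance (I : Ideal Rhat) (i : ℕ) : FiniteDimensional ℂ (leadingForms I i) :=
  Submodule.finiteDimensional_of_le (leadingForms_le_degreeLT I i)

lemma leadingForms_mono {I J : Ideal Rhat} (h : J ≤ I) (i : ℕ) :
    leadingForms J i ≤ leadingForms I i :=
  Submodule.map_mono fun _ hf => ⟨h hf.1, hf.2⟩

lemma leadingForms_le_succ (I : Ideal Rhat) (i : ℕ) : leadingForms I i ≤ leadingForms I (i + 1) := by
  intro p hp
  obtain ⟨f, hfI, hf, rfl⟩ := mem_leadingForms.1 hp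
  exact mem_leadingForms.2 ⟨X 1 * f, I.mul_mem_left _ hfI,
    X_mul_mem_mxy_pow_succ 1 hf, dehomogenize_X_one_mul i f⟩

lemma X_mul_mem_leadingForms_succ {I : Ideal Rhat} {i : ℕ} {p : ℂ[X]} (hp : p ∈ leadingForms I i) :
    Polynomial.X * p ∈ leadingForms I (i + 1) := by
  obtain ⟨f, hfI, hf, rfl⟩ := mem_leadingForms.1 hp
  exact mem_leadingForms.2 ⟨X 0 * f, I.mul_mem_left _ hfI,
    X_mul_mem_mxy_pow_succ 0 hf, dehomogenize_X_zero_mul i f⟩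

lemma leadingForms_lt_succ {I : Ideal Rhat} {i : ℕ} (h : leadingForms I i ≠ ⊥) :
    leadingForms I i < leadingForms I (i + 1) := by
  refine lt_of_le_of_ne (leadingForms_le_succ I i) fun heq => h ?_
  refine Polynomial.eq_bot_of_X_mul_mem (leadingForms_le_degreeLT I i) fun p hp => ?_
  exact heq ▸ X_mul_mem_leadingForms_succ hp

lemma mem_inf_sup_mxy_pow_succ_iff {I : Ideal Rhat} {i : ℕ} {f : Rhat} (hf : f ∈ mxy ^ i) :
    f ∈ (I ⊓ mxy ^ i) ⊔ mxy ^ (i + 1) ↔ dehomogenize i f ∈ leadingForms I i := by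
  constructor
  · intro hsup
    obtain ⟨g, hg, r, hr, rfl⟩ := Submodule.mem_sup.1 hsup
    refine mem_leadingForms.2 ⟨g, hg.1, hg.2, ?_⟩
    rw [map_add, (dehomogenize_eq_zero_iff (Ideal.pow_le_pow_right i.le_succ hr)).2 hr, add_zero]
  · intro hlf
    obtain ⟨g, hgI, hg, hfg⟩ := mem_leadingForms.1 hlf
    have hsub : f - g ∈ mxy ^ (i + 1) := by
      rw [← dehomogenize_eq_zero_iff (sub_mem hf hg), map_sub, hfg, sub_self]
    simpa using Submodule.add_mem_sup (show g ∈ I ⊓ mxy ^ i from ⟨hgI, hg⟩) hsub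

theorem hsType_add_finrank_leadingForms (I : Ideal Rhat) (i : ℕ) :
    hsType I i + Module.finrank ℂ (leadingForms I i) = i + 1 := by
  let D := Polynomial.degreeLT ℂ (i + 1)
  let φ : ↥(mxy ^ i) →ₗ[ℂ] D := LinearMap.codRestrict D
    ((dehomogenize i).comp ((mxy ^ i).subtype.restrictScalars ℂ))
    fun f => dehomogenize_mem_degreeLT i f
  have hφ : Function.Surjective φ := fun p =>
    ⟨⟨homogenize i p, homogenize_mem_mxy_pow i p⟩, Subtype.ext (dehomogenize_homogenize p.2)⟩
  have hcomap : (Submodule.comap (mxy ^ i).subtype ((I ⊓ mxy ^ i) ⊔ mxy ^ (i + 1))).restrictScalars ℂ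
      = ((leadingForms I i).comap D.subtype).comap φ := by
    ext ⟨f, hf⟩
    exact mem_inf_sup_mxy_pow_succ_iff hf
  have hrank := Submodule.finrank_quotient_comap_add_finrank hφ ((leadingForms I i).comap D.subtype)
  rw [← hcomap, (Submodule.Quotient.restrictScalarsEquiv ℂ _).finrank_eq,
    (Submodule.comapSubtypeEquivOfLe (leadingForms_le_degreeLT I i)).finrank_eq,
    Polynomial.finrank_degreeLT] at hrank
  exact hrank

theorem admissible_hsType {I : Ideal Rhat} (h : ∃ i, hsType I i ≠ i + 1) :
    Admissible (hsType I) := by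
  classical
  have hex : ∃ i, leadingForms I i ≠ ⊥ := by
    obtain ⟨i, hi⟩ := h
    refine ⟨i, fun hbot => hi ?_⟩
    have := hsType_add_finrank_leadingForms I i
    rwa [hbot, finrank_bot, add_zero] at this
  have hne (i : ℕ) (hi : Nat.find hex ≤ i) : leadingForms I i ≠ ⊥ :=
    ne_bot_of_le_ne_bot (Nat.find_spec hex) (monotone_nat_of_le_succ (leadingForms_le_succ I) hi)
  refine ⟨Nat.find hex, fun i hi => ?_, ?_, fun i hi => ?_⟩
  · have := hsType_add_finrank_leadingForms I i
    rwa [not_not.1 (Nat.find_min hex hi), finrank_bot, add_zero] at this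
  · have hpos := Submodule.finrank_eq_zero.not.2 (Nat.find_spec hex)
    have := hsType_add_finrank_leadingForms I (Nat.find hex)
    omega
  · have hlt := Submodule.finrank_lt_finrank_of_lt (leadingForms_lt_succ (hne i hi))
    have := hsType_add_finrank_leadingForms I i
    have := hsType_add_finrank_leadingForms I (i + 1)
    omega

lemma hsType_le_of_le {I J : Ideal Rhat} (h : J ≤ I) (i : ℕ) : hsType I i ≤ hsType J i := by
  have := Submodule.finrank_mono (leadingForms_mono h i)
  have := hsType_add_finrank_leadingForms I i
  have := hsType_add_finrank_leadingForms J i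
  omega

def stairSet (t : ℕ → ℕ) : Set (Fin 2 →₀ ℕ) := {e | e 1 < t e.degree}

lemma mem_stairSet {t : ℕ → ℕ} {e : Fin 2 →₀ ℕ} : e ∈ stairSet t ↔ e 1 < t e.degree := Iff.rfl

lemma Admissible.le_succ {t : ℕ → ℕ} (ht : Admissible t) (i : ℕ) : t i ≤ i + 1 := by
  obtain ⟨d, hlow, htd, hdec⟩ := ht
  rcases lt_or_ge i d with hi | hi
  · exact (hlow i hi).le
  · have := antitoneOn_nat_Ici_of_succ_le hdec (le_refl d) hi hi
    omega

lemma Admissible.mem_stairSet_of_le {t : ℕ → ℕ} (ht : Admissible t) {e e' : Fin 2 →₀ ℕ}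
    (he : e ∈ stairSet t) (hle : e' ≤ e) : e' ∈ stairSet t := by
  obtain ⟨d, hlow, -, hdec⟩ := ht
  have h1 : e' 1 ≤ e 1 := hle 1
  have hdeg : e'.degree ≤ e.degree := Finsupp.degree_mono hle
  rw [mem_stairSet] at he ⊢
  rcases lt_or_ge e'.degree d with hd | hd
  · rw [hlow _ hd, degree_eq_add]; omega
  · exact lt_of_lt_of_le (h1.trans_lt he)
      (antitoneOn_nat_Ici_of_succ_le hdec hd (hd.trans hdeg) hdeg)

def stairIdeal (t : ℕ → ℕ) (ht : Admissible t) : Ideal Rhat :=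
  coeffVanishingIdeal (stairSet t) fun _ he _ hle => ht.mem_stairSet_of_le he hle

lemma stairIdeal_le_of_le {t t' : ℕ → ℕ} (ht : Admissible t) (ht' : Admissible t') (h : t ≤ t') :
    stairIdeal t' ht' ≤ stairIdeal t ht :=
  fun _ hf e he => hf e (lt_of_lt_of_le he (h _))

lemma leadingForms_stairIdeal {t : ℕ → ℕ} (ht : Admissible t) (i : ℕ) :
    leadingForms (stairIdeal t ht) i = Polynomial.degreeLT ℂ (i + 1 - t i) := by
  apply le_antisymm
  · rintro _ ⟨f, ⟨hfI, -⟩, rfl⟩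
    refine Polynomial.mem_degreeLT_iff_coeff.2 fun a ha => ?_
    rw [coeff_dehomogenize]
    split_ifs with hai
    · refine hfI _ ?_
      rw [mem_stairSet, degree_expXY, expXY_apply_one, Nat.add_sub_cancel' hai]
      omega
    · rfl
  · intro p hp
    have hp' : p ∈ Polynomial.degreeLT ℂ (i + 1) := Polynomial.degreeLT_mono (by omega) hp
    refine mem_leadingForms.2 ⟨homogenize i p, fun e he => ?_, homogenize_mem_mxy_pow i p,
      dehomogenize_homogenize hp'⟩
    rw [coeff_homogenize]
    split_ifs with hdeg
    · rw [mem_stairSet, hdeg] at he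
      rw [degree_eq_add] at hdeg
      exact Polynomial.mem_degreeLT_iff_coeff.1 hp _ (by omega)
    · rfl

lemma hsType_stairIdeal {t : ℕ → ℕ} (ht : Admissible t) (i : ℕ) :
    hsType (stairIdeal t ht) i = t i := by
  have := hsType_add_finrank_leadingForms (stairIdeal t ht) i
  rw [leadingForms_stairIdeal, Polynomial.finrank_degreeLT] at this
  have := ht.le_succ i
  omega

def stairFinset {t : ℕ → ℕ} (hfin : (Function.support t).Finite) : Finset (Fin 2 →₀ ℕ) :=
  (hfin.toFinset.sigma fun s => Finset.range (t s)).image fun p => expXY (p.1 - p.2) p.2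

lemma coe_stairFinset {t : ℕ → ℕ} (ht : Admissible t) (hfin : (Function.support t).Finite) :
    (stairFinset hfin : Set (Fin 2 →₀ ℕ)) = stairSet t := by
  ext e
  simp only [stairFinset, Finset.coe_image, Set.mem_image, Finset.mem_coe, Finset.mem_sigma,
    Set.Finite.mem_toFinset, Function.mem_support, Finset.mem_range, mem_stairSet]
  constructor
  · rintro ⟨⟨s, b⟩, ⟨-, hb : b < t s⟩, rfl⟩
    have := ht.le_succ s
    simpa [show s - b + b = s by omega] using hb
  · intro he
    refine ⟨⟨e.degree, e 1⟩, ⟨Nat.ne_zero_of_lt he, he⟩, ?_⟩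
    conv_rhs => rw [← expXY_apply_self e]
    rw [degree_eq_add, Nat.add_sub_cancel]

lemma card_stairFinset {t : ℕ → ℕ} (ht : Admissible t) (hfin : (Function.support t).Finite) :
    (stairFinset hfin).card = ∑ᶠ i, t i := by
  rw [stairFinset, Finset.card_image_of_injOn, Finset.card_sigma, finsum_eq_sum _ hfin]
  · simp
  rintro ⟨s, b⟩ hsb ⟨s', b'⟩ hsb' heq
  simp only [Finset.coe_sigma, Set.mem_sigma_iff, Set.Finite.coe_toFinset, Finset.coe_range,
    Set.mem_Iio] at hsb hsb'
  obtain ⟨h0, h1⟩ := expXY_inj.1 heq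
  have := ht.le_succ s
  have := ht.le_succ s'
  simp only at h0 h1
  subst h1
  obtain rfl : s = s' := by omega
  rfl

theorem rank_quotient_stairIdeal {t : ℕ → ℕ} (ht : Admissible t)
    (hfin : (Function.support t).Finite) :
    Module.rank ℂ (Rhat ⧸ stairIdeal t ht) = ((∑ᶠ i, t i : ℕ) : Cardinal) := by
  rw [stairIdeal, (quotientCoeffVanishingIdealEquiv _ _).rank_eq, ← coe_stairFinset ht hfin,
    rank_fun']
  exact_mod_cast (Fintype.card_coe _).trans (card_stairFinset ht hfin)

theorem statement13_general (k n : ℕ) (t : Fin k → ℕ → ℕ)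
    (hfin : ∀ j : Fin k, (Function.support (t j)).Finite)
    (hsum : ∀ j : Fin k, (∑ᶠ i : ℕ, t j i) = n + (j : ℕ)) :
    (∃ I : Fin k → Ideal Rhat,
        (∀ j : ℕ, ∀ hj : j + 1 < k, I ⟨j + 1, hj⟩ ≤ I ⟨j, Nat.lt_of_succ_lt hj⟩) ∧
        (∀ j : Fin k, Module.rank ℂ (Rhat ⧸ I j) = ((n + (j : ℕ) : ℕ) : Cardinal)) ∧
        (∀ j : Fin k, ∀ i : ℕ, hsType (I j) i = t j i))
      ↔ ((∀ j : Fin k, Admissible (t j)) ∧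
          (∀ j : ℕ, ∀ hj : j + 1 < k, ∃ m : ℕ,
            t ⟨j + 1, hj⟩ m = t ⟨j, Nat.lt_of_succ_lt hj⟩ m + 1 ∧
            ∀ i : ℕ, i ≠ m → t ⟨j + 1, hj⟩ i = t ⟨j, Nat.lt_of_succ_lt hj⟩ i)) := by
  constructor
  · rintro ⟨I, hchain, -, hts⟩
    have ht (j : Fin k) : t j = hsType (I j) := funext fun i => (hts j i).symm
    refine ⟨fun j => ?_, fun j hj => ?_⟩
    · obtain ⟨i, hi⟩ := (hfin j).exists_notMem
      rw [ht j]
      refine admissible_hsType ⟨i, ?_⟩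
      rw [← ht j, Function.notMem_support.1 hi]
      omega
    · refine exists_eq_add_one_of_finsum_eq_add_one (hfin _) (fun i => ?_) ?_
      · rw [ht, ht]
        exact hsType_le_of_le (hchain j hj) i
      · rw [hsum, hsum]
        rfl
  · rintro ⟨hadm, hstep⟩
    refine ⟨fun j => stairIdeal (t j) (hadm j), fun j hj => stairIdeal_le_of_le _ _ fun i => ?_,
      fun j => ?_, fun j i => hsType_stairIdeal (hadm j) i⟩
    · obtain ⟨m, hm, hother⟩ := hstep j hj
      rcases eq_or_ne i m with rfl | hi
      · exact (Nat.le_succ _).trans_eq hm.symm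
      · exact (hother i hi).ge
    · rw [rank_quotient_stairIdeal (hadm j) (hfin j), hsum j]

/-- A `k`-tuple of sequences with sums `n, n+1, …, n+k−1` is realized by a chain of
ideals `I₁ ⊇ ⋯ ⊇ I_k` of these colengths iff each sequence is admissible and each
consecutive pair differs by an increment of `1` at a single index. -/
theorem statement13 (k n : ℕ) (hk : 1 ≤ k) (t : Fin k → ℕ → ℕ)
    (hfin : ∀ j : Fin k, (Function.support (t j)).Finite)
    (hsum : ∀ j : Fin k, (∑ᶠ i : ℕ, t j i) = n + (j : ℕ)) :
    (∃ I : Fin k → Ideal Rhat,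
        (∀ j : ℕ, ∀ hj : j + 1 < k, I ⟨j + 1, hj⟩ ≤ I ⟨j, Nat.lt_of_succ_lt hj⟩) ∧
        (∀ j : Fin k, Module.rank ℂ (Rhat ⧸ I j) = ((n + (j : ℕ) : ℕ) : Cardinal)) ∧
        (∀ j : Fin k, ∀ i : ℕ, hsType (I j) i = t j i))
      ↔ ((∀ j : Fin k, Admissible (t j)) ∧
          (∀ j : ℕ, ∀ hj : j + 1 < k, ∃ m : ℕ,
            t ⟨j + 1, hj⟩ m = t ⟨j, Nat.lt_of_succ_lt hj⟩ m + 1 ∧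
            ∀ i : ℕ, i ≠ m → t ⟨j + 1, hj⟩ i = t ⟨j, Nat.lt_of_succ_lt hj⟩ i)) :=
  statement13_general k n t hfin hsum
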